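/- arXiv:1803.08558 — 2 statements merged into one kernel-verified Lean document; each statement's English description precedes it below -/
import Mathlib

section
/- Let m, n be positive integers, G a real m×n matrix, a ∈ ℝ^m, k ∈ ℝ^n, and λ ≥ 0. Then the supremum, over all real m×n matrices Δ with Frobenius norm ‖Δ‖_F ≤ λ, of the Euclidean norm ‖(G + Δ)k − a‖₂ equals ‖Gk − a‖₂ + λ‖k‖₂. -/
open scoped BigOperators

noncomputable def frobeniusNorm {m n : ℕ} (M : Matrix (Fin m) (Fin n) ℝ) : ℝ :=
  Real.sqrt (∑ i, ∑ j, (M i j) ^ 2)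

noncomputable def euclNorm {m : ℕ} (v : Fin m → ℝ) : ℝ :=
  Real.sqrt (∑ i, (v i) ^ 2)

/-!
With `r = G k - a`, the triangle inequality and `‖Δ k‖ ≤ ‖Δ‖_F ‖k‖` bound `‖r + Δ k‖` by
`‖r‖ + λ ‖k‖`. The bound is attained by the rank-one matrix `Δ = λ u (k / ‖k‖)ᵀ`, where `u` is a
unit vector on the ray of `r`: then `Δ k = λ ‖k‖ u` lies on that ray too, so the triangle
inequality is an equality.
-/

open Matrix WithLp
open scoped Matrix.Norms.Frobenius

namespace Matrix

variable {𝕜 m n : Type*} [RCLike 𝕜] [Fintype m] [Fintype n]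

theorem frobenius_norm_mulVec_le (A : Matrix m n 𝕜) (v : n → 𝕜) :
    ‖toLp 2 (A *ᵥ v)‖ ≤ ‖A‖ * ‖toLp 2 v‖ := by
  simpa only [← frobenius_norm_replicateCol (ι := Unit), replicateCol_mulVec] using
    frobenius_norm_mul A (replicateCol Unit v)

theorem frobenius_norm_vecMulVec_le (u : m → 𝕜) (v : n → 𝕜) :
    ‖vecMulVec u v‖ ≤ ‖toLp 2 u‖ * ‖toLp 2 v‖ := by
  simpa only [vecMulVec_eq Unit, frobenius_norm_replicateCol, frobenius_norm_replicateRow] using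
    frobenius_norm_mul (replicateCol Unit u) (replicateRow Unit v)

end Matrix

theorem exists_norm_eq_one_sameRay {E : Type*} [NormedAddCommGroup E] [NormedSpace ℝ E]
    [Nontrivial E] (x : E) : ∃ u : E, ‖u‖ = 1 ∧ SameRay ℝ x u := by
  rcases eq_or_ne x 0 with rfl | hx
  · obtain ⟨u, hu⟩ := exists_norm_eq E zero_le_one
    exact ⟨u, hu, SameRay.zero_left u⟩
  · exact ⟨‖x‖⁻¹ • x, norm_smul_inv_norm hx, SameRay.sameRay_pos_smul_right x (by positivity)⟩

theorem isGreatest_norm_add_mulVec {m n : Type*} [Fintype m] [Fintype n] [Nonempty m]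
    (r : m → ℝ) (k : n → ℝ) {lam : ℝ} (hlam : 0 ≤ lam) :
    IsGreatest {x | ∃ Δ : Matrix m n ℝ, ‖Δ‖ ≤ lam ∧ x = ‖toLp 2 (r + Δ *ᵥ k)‖}
      (‖toLp 2 r‖ + lam * ‖toLp 2 k‖) := by
  constructor
  · obtain ⟨u, hu, hru⟩ := exists_norm_eq_one_sameRay (toLp 2 r)
    set c := ‖toLp 2 k‖
    have hkk : k ⬝ᵥ k = c ^ 2 := by
      rw [← real_inner_self_eq_norm_sq, EuclideanSpace.inner_toLp_toLp, star_trivial]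
    -- when `k = 0`, the junk value `c⁻¹ = 0` makes this `Δ = 0`, which still attains the bound
    refine ⟨lam • vecMulVec (ofLp u) (c⁻¹ • k), ?_, ?_⟩
    · calc ‖lam • vecMulVec (ofLp u) (c⁻¹ • k)‖ ≤ lam * (‖u‖ * (c⁻¹ * c)) := by
            rw [norm_smul, Real.norm_of_nonneg hlam]
            gcongr
            refine (frobenius_norm_vecMulVec_le _ _).trans_eq ?_
            rw [toLp_ofLp, toLp_smul, norm_smul, Real.norm_of_nonneg (by positivity)]
        _ ≤ lam := by
            rw [hu, one_mul]
            exact mul_le_of_le_one_right hlam (inv_mul_le_one_of_le₀ le_rfl (norm_nonneg _))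
    · have hΔk : (lam • vecMulVec (ofLp u) (c⁻¹ • k)) *ᵥ k = ofLp ((lam * c) • u) := by
        rw [smul_mulVec, vecMulVec_mulVec, smul_dotProduct, hkk, smul_eq_mul, sq, ← mul_assoc,
          inv_mul_mul_self, op_smul_eq_smul, smul_smul, ofLp_smul]
      rw [hΔk, toLp_add, toLp_ofLp, (hru.nonneg_smul_right (by positivity)).norm_add,
        norm_smul, hu, Real.norm_of_nonneg (by positivity), mul_one]
  · rintro _ ⟨Δ, hΔ, rfl⟩
    calc ‖toLp 2 (r + Δ *ᵥ k)‖ ≤ ‖toLp 2 r‖ + ‖Δ‖ * ‖toLp 2 k‖ := by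
          rw [toLp_add]
          exact (norm_add_le _ _).trans (add_le_add_right (frobenius_norm_mulVec_le Δ k) _)
      _ ≤ ‖toLp 2 r‖ + lam * ‖toLp 2 k‖ := by gcongr

theorem euclNorm_eq_norm_toLp {m : ℕ} (v : Fin m → ℝ) : euclNorm v = ‖toLp 2 v‖ := by
  simp [euclNorm, EuclideanSpace.norm_eq]

theorem frobeniusNorm_eq_norm {m n : ℕ} (M : Matrix (Fin m) (Fin n) ℝ) :
    frobeniusNorm M = ‖M‖ := by
  simp [frobeniusNorm, frobenius_norm_def, Real.sqrt_eq_rpow]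

theorem robust_inner_sup_general (m n : ℕ) (hm : 0 < m)
    (G : Matrix (Fin m) (Fin n) ℝ) (a : Fin m → ℝ) (k : Fin n → ℝ)
    (lam : ℝ) (hlam : 0 ≤ lam) :
    sSup {x : ℝ | ∃ Δ : Matrix (Fin m) (Fin n) ℝ, frobeniusNorm Δ ≤ lam ∧
          x = euclNorm ((G + Δ).mulVec k - a)} =
      euclNorm (G.mulVec k - a) + lam * euclNorm k := by
  have : Nonempty (Fin m) := Fin.pos_iff_nonempty.mp hm
  simp_rw [frobeniusNorm_eq_norm, euclNorm_eq_norm_toLp, add_mulVec, add_sub_right_comm]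
  exact (isGreatest_norm_add_mulVec (G *ᵥ k - a) k hlam).csSup_eq

/-- The supremum, over all real `m × n` matrices `Δ` with Frobenius norm `‖Δ‖_F ≤ λ`,
of `‖(G + Δ) k − a‖₂` equals `‖G k − a‖₂ + λ ‖k‖₂`. -/
theorem robust_inner_sup (m n : ℕ) (hm : 0 < m) (hn : 0 < n)
    (G : Matrix (Fin m) (Fin n) ℝ) (a : Fin m → ℝ) (k : Fin n → ℝ)
    (lam : ℝ) (hlam : 0 ≤ lam) :
    sSup {x : ℝ | ∃ Δ : Matrix (Fin m) (Fin n) ℝ, frobeniusNorm Δ ≤ lam ∧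
          x = euclNorm ((G + Δ).mulVec k - a)} =
      euclNorm (G.mulVec k - a) + lam * euclNorm k :=
  robust_inner_sup_general m n hm G a k lam hlam
end

section
/- Let S be a symmetric positive definite real n×n matrix, B a real p×n matrix, and σ > 0. Then det(B S Bᵀ + σ² I_p) ≥ σ^{2p}, with equality if and only if B = 0. Consequently, the quantity (1/2) log ( det(B S Bᵀ + σ² I_p) / σ^{2p} ) is nonnegative, and it equals zero if and only if B = 0. -/
/-!
Diagonalising the positive semidefinite matrix `B S Bᵀ` gives
`det (B S Bᵀ + σ² I) = ∏ᵢ (λᵢ + σ²)` with all `λᵢ ≥ 0`, so the determinant is at least `σ^(2p)`,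
with equality iff every `λᵢ` vanishes, i.e. iff `B S Bᵀ = 0`. The diagonal entries of `B S Bᵀ`
are the quadratic forms `bᵢ S bᵢᵀ` of the rows of `B`, so positive definiteness of `S` then forces
`B = 0`. The logarithmic statements follow since `log` is positive exactly on `(1, ∞)`.
-/

open Matrix

namespace Matrix

-- Written as `star x ⬝ᵥ (S *ᵥ x)` with `x = star (B i)`, the shape used by `PosDef`.
lemma mul_mul_conjTranspose_apply_self {m n R : Type*} [Fintype n] [Ring R] [StarRing R]
    (B : Matrix m n R) (S : Matrix n n R) (i : m) :
    (B * S * Bᴴ) i i = star (star (B i)) ⬝ᵥ (S *ᵥ star (B i)) := by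
  simp only [star_star, mul_apply, dotProduct, mulVec, Finset.mul_sum, Finset.sum_mul, mul_assoc,
    conjTranspose_apply, Pi.star_apply]
  exact Finset.sum_comm

lemma PosDef.mul_mul_conjTranspose_eq_zero_iff {m n R : Type*} [Fintype n] [Ring R]
    [PartialOrder R] [StarRing R] {S : Matrix n n R} (hS : S.PosDef) {B : Matrix m n R} :
    B * S * Bᴴ = 0 ↔ B = 0 := by
  refine ⟨fun h => ?_, fun h => by simp [h]⟩
  ext i j
  have hrow : star (B i) = 0 := by
    by_contra hne
    have hpos := hS.dotProduct_mulVec_pos hne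
    rw [← mul_mul_conjTranspose_apply_self, h] at hpos
    exact hpos.false
  simpa using congrFun hrow j

variable {m : Type*} [Fintype m] [DecidableEq m]

lemma IsHermitian.det_add_smul_one {𝕜 : Type*} [RCLike 𝕜] {A : Matrix m m 𝕜}
    (hA : A.IsHermitian) (c : ℝ) :
    (A + (c : 𝕜) • 1).det = ∏ i, ((hA.eigenvalues i + c : ℝ) : 𝕜) := by
  have hdiag : diagonal (fun i => ((hA.eigenvalues i + c : ℝ) : 𝕜))
      = diagonal (RCLike.ofReal ∘ hA.eigenvalues) + algebraMap 𝕜 _ c := by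
    simp [algebraMap_eq_diagonal, diagonal_add, Function.comp_def]
  have hconj : A + (c : 𝕜) • 1 = Unitary.conjStarAlgAut 𝕜 _ hA.eigenvectorUnitary
      (diagonal fun i => ((hA.eigenvalues i + c : ℝ) : 𝕜)) := by
    rw [hdiag, map_add, AlgHomClass.commutes, ← hA.spectral_theorem,
      Algebra.algebraMap_eq_smul_one]
  rw [hconj, Unitary.conjStarAlgAut_apply, det_mul_comm, ← Matrix.mul_assoc,
    Unitary.coe_star_mul_self, Matrix.one_mul, det_diagonal]

namespace PosSemidef

variable {A : Matrix m m ℝ}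

lemma det_add_smul_one (hA : A.PosSemidef) (c : ℝ) :
    (A + c • 1).det = ∏ i, (hA.1.eigenvalues i + c) := by
  simpa using hA.1.det_add_smul_one c

lemma pow_card_le_det_add_smul_one (hA : A.PosSemidef) {c : ℝ} (hc : 0 ≤ c) :
    c ^ Fintype.card m ≤ (A + c • 1).det := by
  rw [hA.det_add_smul_one, ← Finset.card_univ, ← Finset.prod_const]
  exact Finset.prod_le_prod (fun _ _ => hc)
    fun i _ => le_add_of_nonneg_left (hA.eigenvalues_nonneg i)

lemma pow_card_lt_det_add_smul_one (hA : A.PosSemidef) (hA0 : A ≠ 0) {c : ℝ} (hc : 0 < c) :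
    c ^ Fintype.card m < (A + c • 1).det := by
  obtain ⟨j, hj⟩ : ∃ j, hA.1.eigenvalues j ≠ 0 := by
    by_contra! h
    exact hA0 (hA.1.eigenvalues_eq_zero_iff.mp (funext h))
  rw [hA.det_add_smul_one, ← Finset.card_univ, ← Finset.prod_const]
  exact Finset.prod_lt_prod (fun _ _ => hc)
    (fun i _ => le_add_of_nonneg_left (hA.eigenvalues_nonneg i))
    ⟨j, Finset.mem_univ j, lt_add_of_pos_left c ((hA.eigenvalues_nonneg j).lt_of_ne' hj)⟩

lemma det_add_smul_one_eq_pow_card_iff (hA : A.PosSemidef) {c : ℝ} (hc : 0 < c) :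
    (A + c • 1).det = c ^ Fintype.card m ↔ A = 0 := by
  refine ⟨fun h => ?_, fun h => by simp [h]⟩
  by_contra hA0
  exact (hA.pow_card_lt_det_add_smul_one hA0 hc).ne' h

end PosSemidef

end Matrix

lemma Real.log_div_eq_zero_iff_of_le {x y : ℝ} (hy : 0 < y) (hxy : y ≤ x) :
    Real.log (x / y) = 0 ↔ x = y := by
  refine ⟨fun h => ?_, fun h => by rw [h, div_self hy.ne', Real.log_one]⟩
  by_contra hne
  have hlt : 1 < x / y := (one_lt_div hy).mpr (hxy.lt_of_ne' hne)
  exact (Real.log_pos hlt).ne' h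

theorem information_transfer_zero_iff_general (n p : ℕ)
    (S : Matrix (Fin n) (Fin n) ℝ) (hS : S.PosDef)
    (B : Matrix (Fin p) (Fin n) ℝ) (σ : ℝ) (hσ : 0 < σ) :
    σ ^ (2 * p) ≤ (B * S * Bᵀ + σ ^ 2 • (1 : Matrix (Fin p) (Fin p) ℝ)).det ∧
    ((B * S * Bᵀ + σ ^ 2 • (1 : Matrix (Fin p) (Fin p) ℝ)).det = σ ^ (2 * p) ↔ B = 0) ∧
    0 ≤ (1 / 2 : ℝ) * Real.log
        ((B * S * Bᵀ + σ ^ 2 • (1 : Matrix (Fin p) (Fin p) ℝ)).det / σ ^ (2 * p)) ∧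
    ((1 / 2 : ℝ) * Real.log
        ((B * S * Bᵀ + σ ^ 2 • (1 : Matrix (Fin p) (Fin p) ℝ)).det / σ ^ (2 * p)) = 0 ↔
      B = 0) := by
  have hBt : Bᵀ = Bᴴ := (conjTranspose_eq_transpose_of_trivial B).symm
  have hM : (B * S * Bᵀ).PosSemidef := hBt ▸ hS.posSemidef.mul_mul_conjTranspose_same B
  have hpow : σ ^ (2 * p) = (σ ^ 2) ^ Fintype.card (Fin p) := by rw [Fintype.card_fin, pow_mul]
  have hle := hM.pow_card_le_det_add_smul_one (sq_nonneg σ)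
  have hBSB : B * S * Bᵀ = 0 ↔ B = 0 := hBt ▸ hS.mul_mul_conjTranspose_eq_zero_iff
  have hiff := (hM.det_add_smul_one_eq_pow_card_iff (pow_pos hσ 2)).trans hBSB
  rw [← hpow] at hle hiff
  have hlog_iff := Real.log_div_eq_zero_iff_of_le (pow_pos hσ (2 * p)) hle
  refine ⟨hle, hiff, ?_, ?_⟩
  · exact mul_nonneg (by norm_num) (Real.log_nonneg ((one_le_div (by positivity)).mpr hle))
  · rw [mul_eq_zero, or_iff_right (by norm_num), hlog_iff, hiff]

/-- For a symmetric positive definite `S`, a `p × n` matrix `B` and `σ > 0`, one has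
`det(B S Bᵀ + σ² I) ≥ σ^(2p)` with equality iff `B = 0`; hence the information transfer
`(1/2) log (det(B S Bᵀ + σ² I) / σ^(2p))` is nonnegative and vanishes iff `B = 0`. -/
theorem information_transfer_zero_iff (n p : ℕ) (hn : 0 < n) (hp : 0 < p)
    (S : Matrix (Fin n) (Fin n) ℝ) (hS : S.PosDef)
    (B : Matrix (Fin p) (Fin n) ℝ) (σ : ℝ) (hσ : 0 < σ) :
    σ ^ (2 * p) ≤ (B * S * Bᵀ + σ ^ 2 • (1 : Matrix (Fin p) (Fin p) ℝ)).det ∧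
    ((B * S * Bᵀ + σ ^ 2 • (1 : Matrix (Fin p) (Fin p) ℝ)).det = σ ^ (2 * p) ↔ B = 0) ∧
    0 ≤ (1 / 2 : ℝ) * Real.log
        ((B * S * Bᵀ + σ ^ 2 • (1 : Matrix (Fin p) (Fin p) ℝ)).det / σ ^ (2 * p)) ∧
    ((1 / 2 : ℝ) * Real.log
        ((B * S * Bᵀ + σ ^ 2 • (1 : Matrix (Fin p) (Fin p) ℝ)).det / σ ^ (2 * p)) = 0 ↔
      B = 0) :=
  information_transfer_zero_iff_general n p S hS B σ hσ
end
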